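/- arXiv:math/0508558 — 7 statements merged into one kernel-verified Lean document; each statement's English description precedes it below -/
import Mathlib

section
/- Let g be a Lie algebra with an A₄-action as automorphisms (generators τ₁, τ₂, φ satisfying the A₄ relations), inducing the decomposition g = t ⊕ ι₀(A) ⊕ ι₁(A) ⊕ ι₂(A) where A = g₀ and ι_i = φ^i ∘ ι₀. Define ρ_i : t → gl(A) by [d, ι_i(x)] = ι_i(ρ_i(d)(x)), and define x*y on A by [ι₁(x), ι₂(y)] = ι₀(x*y). Then the map ρ(d) = (ρ₀(d), ρ₁(d), ρ₂(d)) is a Lie algebra homomorphism from t into stri(A,*). -/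
/-!
Everything follows from the Jacobi identity. Since `φ` is a Lie automorphism of order three
with `φ ∘ ιᵢ = ιᵢ₊₁`, the defining relation `[ι₁ x, ι₂ y] = ι₀ (x * y)` propagates to
`[ιᵢ₊₁ x, ιᵢ₊₂ y] = ιᵢ (x * y)` for every `i`. Applying `ad d` to this relation gives the
triality identity for `ρ d`, and `ad ⁅d, e⁆ = ⁅ad d, ad e⁆` on each `ιᵢ(A)` gives
`ρ ⁅d, e⁆ = ⁅ρ d, ρ e⁆`, the embeddings `ιᵢ` being injective. Finally `t` is closed under the
bracket, being the common fixed space of the automorphisms `τ₁, τ₂`.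
-/

/-- The symmetric triality set `stri(A,*)`. -/
def striSet (F : Type*) [Field F] (A : Type*) [AddCommGroup A] [Module F A]
    (mul : A →ₗ[F] A →ₗ[F] A) : Set (ZMod 3 → Module.End F A) :=
  {d | ∀ (i : ZMod 3) (x y : A), d i (mul x y) = mul (d (i + 1) x) y + mul x (d (i + 2) y)}

/-- The embedding `ιᵢ = φ^i ∘ ι₀` of the coordinate space `A = g₀` into `g`. -/
def iota {F : Type*} [Field F] {g : Type*} [LieRing g] [LieAlgebra F g]
    (φ : g →ₗ⁅F⁆ g) (A : Submodule F g) (i : ZMod 3) (x : A) : g :=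
  (fun z => φ z)^[i.val] (x : g)

section

variable {F : Type*} [Field F] {g : Type*} [LieRing g] [LieAlgebra F g]

theorem LieHom.lie_mem_eigenspace_one (f : g →ₗ⁅F⁆ g) {x y : g}
    (hx : x ∈ Module.End.eigenspace (f : g →ₗ[F] g) 1)
    (hy : y ∈ Module.End.eigenspace (f : g →ₗ[F] g) 1) :
    ⁅x, y⁆ ∈ Module.End.eigenspace (f : g →ₗ[F] g) 1 := by
  rw [Module.End.mem_eigenspace_iff, one_smul] at hx hy ⊢
  simp only [LieHom.coe_toLinearMap, LieHom.map_lie] at hx hy ⊢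
  rw [hx, hy]

variable {φ : g →ₗ⁅F⁆ g} {A : Submodule F g}

theorem iota_eq_pow_apply (i : ZMod 3) (x : A) :
    iota φ A i x = ((φ : g →ₗ[F] g) ^ i.val) x := by
  rw [Module.End.pow_apply]
  rfl

theorem iota_add (i : ZMod 3) (x y : A) : iota φ A i (x + y) = iota φ A i x + iota φ A i y := by
  simp only [iota_eq_pow_apply, Submodule.coe_add, map_add]

theorem iota_sub (i : ZMod 3) (x y : A) : iota φ A i (x - y) = iota φ A i x - iota φ A i y := by
  simp only [iota_eq_pow_apply, Submodule.coe_sub, map_sub]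

theorem iota_injective (hφ3 : ∀ x, φ (φ (φ x)) = x) (i : ZMod 3) :
    Function.Injective (iota φ A i) := by
  have hφ : Function.Injective φ := Function.LeftInverse.injective (g := fun x => φ (φ x)) hφ3
  intro x y h
  exact Subtype.ext (hφ.iterate i.val h)

theorem map_iota (hφ3 : ∀ x, φ (φ (φ x)) = x) (i : ZMod 3) (x : A) :
    φ (iota φ A i x) = iota φ A (i + 1) x := by
  fin_cases i
  · rfl
  · rfl
  · exact hφ3 x

theorem lie_iota_add_one_iota_add_two (hφ3 : ∀ x, φ (φ (φ x)) = x)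
    {mul : A →ₗ[F] A →ₗ[F] A} (hmul : ∀ x y : A, ⁅iota φ A 1 x, iota φ A 2 y⁆ = iota φ A 0 (mul x y))
    (i : ZMod 3) (x y : A) :
    ⁅iota φ A (i + 1) x, iota φ A (i + 2) y⁆ = iota φ A i (mul x y) := by
  obtain ⟨n, rfl⟩ : ∃ n : ℕ, (n : ZMod 3) = i := ⟨i.val, ZMod.natCast_zmod_val i⟩
  induction n with
  | zero => simpa using hmul x y
  | succ n ih =>
    rw [Nat.cast_succ, add_right_comm _ 1 2, ← map_iota hφ3 _ x, ← map_iota hφ3 _ y,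
      ← map_iota hφ3 _ (mul x y), ← LieHom.map_lie, ih]

theorem mem_striSet_of_lie_iota (hφ3 : ∀ x, φ (φ (φ x)) = x)
    {mul : A →ₗ[F] A →ₗ[F] A} (hmul : ∀ x y : A, ⁅iota φ A 1 x, iota φ A 2 y⁆ = iota φ A 0 (mul x y))
    {d : g} {D : ZMod 3 → Module.End F A}
    (hD : ∀ (i : ZMod 3) (x : A), ⁅d, iota φ A i x⁆ = iota φ A i (D i x)) :
    D ∈ striSet F A mul := by
  intro i x y
  apply iota_injective hφ3 i
  rw [← hD, ← lie_iota_add_one_iota_add_two hφ3 hmul, leibniz_lie, hD, hD,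
    lie_iota_add_one_iota_add_two hφ3 hmul, lie_iota_add_one_iota_add_two hφ3 hmul, iota_add]

theorem eq_lie_of_lie_iota (hφ3 : ∀ x, φ (φ (φ x)) = x) {d e : g}
    {D E DE : ZMod 3 → Module.End F A}
    (hD : ∀ (i : ZMod 3) (x : A), ⁅d, iota φ A i x⁆ = iota φ A i (D i x))
    (hE : ∀ (i : ZMod 3) (x : A), ⁅e, iota φ A i x⁆ = iota φ A i (E i x))
    (hDE : ∀ (i : ZMod 3) (x : A), ⁅⁅d, e⁆, iota φ A i x⁆ = iota φ A i (DE i x)) :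
    DE = ⁅D, E⁆ := by
  ext i x : 2
  apply iota_injective hφ3 i
  rw [LieRing.lie_apply, LieRing.of_associative_ring_bracket, LinearMap.sub_apply,
    Module.End.mul_apply, Module.End.mul_apply, iota_sub, ← hDE, lie_lie, hD, hE, hE, hD]

end

theorem stmt4_general (F : Type*) [Field F]
    (g : Type*) [LieRing g] [LieAlgebra F g]
    (τ₁ τ₂ φ : g →ₗ⁅F⁆ g)
    (hφ3 : ∀ x, φ (φ (φ x)) = x)
    (A : Submodule F g)
    (t : Submodule F g)
    (ht : t = Module.End.eigenspace (τ₁ : g →ₗ[F] g) 1 ⊓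
              Module.End.eigenspace (τ₂ : g →ₗ[F] g) 1)
    (mul : A →ₗ[F] A →ₗ[F] A)
    (hmul : ∀ x y : A, ⁅iota φ A 1 x, iota φ A 2 y⁆ = iota φ A 0 (mul x y))
    (ρ : g →ₗ[F] (ZMod 3 → Module.End F A))
    (hρ : ∀ d ∈ t, ∀ (i : ZMod 3) (x : A), ⁅d, iota φ A i x⁆ = iota φ A i (ρ d i x)) :
    (∀ d ∈ t, ρ d ∈ striSet F A mul) ∧
      (∀ d ∈ t, ∀ e ∈ t, ρ ⁅d, e⁆ = ⁅ρ d, ρ e⁆) := by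
  have lie_mem_t : ∀ d ∈ t, ∀ e ∈ t, ⁅d, e⁆ ∈ t := by
    subst ht
    exact fun d hd e he =>
      ⟨τ₁.lie_mem_eigenspace_one hd.1 he.1, τ₂.lie_mem_eigenspace_one hd.2 he.2⟩
  refine ⟨fun d hd => mem_striSet_of_lie_iota hφ3 hmul (hρ d hd), fun d hd e he => ?_⟩
  exact eq_lie_of_lie_iota hφ3 (hρ d hd) (hρ e he) (hρ _ (lie_mem_t d hd e he))

/-- For a Lie algebra `g` with `A₄`-action, coordinate algebra `A = g₀` with
product `*` defined by `[ι₁(x), ι₂(y)] = ι₀(x*y)`, and `ρᵢ : t → gl(A)` defined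
by `[d, ιᵢ(x)] = ιᵢ(ρᵢ(d)(x))`, the map `ρ = (ρ₀,ρ₁,ρ₂)` is a Lie algebra
homomorphism from `t` into `stri(A,*)`. -/
theorem stmt4 (F : Type*) [Field F] (hchar : (2 : F) ≠ 0)
    (g : Type*) [LieRing g] [LieAlgebra F g]
    (τ₁ τ₂ φ : g →ₗ⁅F⁆ g)
    (hτ₁ : ∀ x, τ₁ (τ₁ x) = x) (hτ₂ : ∀ x, τ₂ (τ₂ x) = x)
    (hcomm : ∀ x, τ₁ (τ₂ x) = τ₂ (τ₁ x))
    (hφ3 : ∀ x, φ (φ (φ x)) = x)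
    (hrel1 : ∀ x, φ (τ₁ x) = τ₂ (φ x))
    (hrel2 : ∀ x, φ (τ₂ x) = τ₁ (τ₂ (φ x)))
    (A : Submodule F g)
    (hA : A = Module.End.eigenspace (τ₁ : g →ₗ[F] g) 1 ⊓
              Module.End.eigenspace (τ₂ : g →ₗ[F] g) (-1))
    (t : Submodule F g)
    (ht : t = Module.End.eigenspace (τ₁ : g →ₗ[F] g) 1 ⊓
              Module.End.eigenspace (τ₂ : g →ₗ[F] g) 1)
    (mul : A →ₗ[F] A →ₗ[F] A)
    (hmul : ∀ x y : A, ⁅iota φ A 1 x, iota φ A 2 y⁆ = iota φ A 0 (mul x y))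
    (ρ : g →ₗ[F] (ZMod 3 → Module.End F A))
    (hρ : ∀ d ∈ t, ∀ (i : ZMod 3) (x : A), ⁅d, iota φ A i x⁆ = iota φ A i (ρ d i x)) :
    (∀ d ∈ t, ρ d ∈ striSet F A mul) ∧
      (∀ d ∈ t, ∀ e ∈ t, ρ ⁅d, e⁆ = ⁅ρ d, ρ e⁆) :=
  stmt4_general F g τ₁ τ₂ φ hφ3 A t ht mul hmul ρ hρ
end

section
/- In the setting of a Lie algebra g with A₄-action and coordinate algebra (A,*) as above, define δ(x,y) = ρ([ι₀(x), ι₀(y)]) ∈ stri(A,*) with components δ_i(x,y). Then δ₁(x,y) = r_y l_x − r_x l_y, where l_x(z) = x*z and r_x(z) = z*x; explicitly, δ₁(x,y)(z) = (x*z)*y − (y*z)*x for all x,y,z ∈ A. -/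
/-- In a Lie algebra with `A₄`-action and coordinate algebra `(A,*)`,
`δ₁(x,y)(z) = (x*z)*y − (y*z)*x`. -/
theorem stmt5
    (F : Type*) [Field F] (hchar : (2 : F) ≠ 0)
    (g : Type*) [LieRing g] [LieAlgebra F g]
    (τ₁ τ₂ φ : g →ₗ⁅F⁆ g)
    (hτ₁ : ∀ x, τ₁ (τ₁ x) = x) (hτ₂ : ∀ x, τ₂ (τ₂ x) = x)
    (hcomm : ∀ x, τ₁ (τ₂ x) = τ₂ (τ₁ x))
    (hφ3 : ∀ x, φ (φ (φ x)) = x)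
    (hrel1 : ∀ x, φ (τ₁ x) = τ₂ (φ x))
    (hrel2 : ∀ x, φ (τ₂ x) = τ₁ (τ₂ (φ x)))
    (A : Submodule F g)
    (hA : A = Module.End.eigenspace (τ₁ : g →ₗ[F] g) 1 ⊓
              Module.End.eigenspace (τ₂ : g →ₗ[F] g) (-1))
    (δ : ZMod 3 → A → A → A → A)
    (hδ : ∀ (i : ZMod 3) (x y z : A),
      ⁅⁅iota φ A 0 x, iota φ A 0 y⁆, iota φ A i z⁆ = iota φ A i (δ i x y z))
    (mul : A →ₗ[F] A →ₗ[F] A)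
    (hmul : ∀ (i : ZMod 3) (x y : A),
      ⁅iota φ A i x, iota φ A (i + 1) y⁆ = iota φ A (i + 2) (mul x y))
    :
    ∀ x y z : A, δ 1 x y z = mul (mul x z) y - mul (mul y z) x := by
  intro x y z
  have e1 : ∀ w : A, iota φ A 1 w = φ (w : g) := fun w => rfl
  have hinj : ∀ a b : A, iota φ A 1 a = iota φ A 1 b → a = b := by
    intro a b hab
    rw [e1, e1] at hab
    have : φ (φ (φ (a : g))) = φ (φ (φ (b : g))) := by rw [hab]
    rw [hφ3, hφ3] at this
    exact Subtype.ext this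
  apply hinj
  have h := hδ 1 x y z
  rw [lie_lie] at h
  have h1 : ⁅iota φ A 0 y, iota φ A 1 z⁆ = iota φ A 2 (mul y z) := by
    have := hmul 0 y z; simpa using this
  have h2 : ⁅iota φ A 0 x, iota φ A 1 z⁆ = iota φ A 2 (mul x z) := by
    have := hmul 0 x z; simpa using this
  have h3 : ⁅iota φ A 0 x, iota φ A 2 (mul y z)⁆ = -iota φ A 1 (mul (mul y z) x) := by
    have h21 : (2 + 1 : ZMod 3) = 0 := by decide
    have h22 : (2 + 2 : ZMod 3) = 1 := by decide
    have := hmul 2 (mul y z) x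
    rw [h21, h22] at this
    rw [← this, lie_skew]
  have h4 : ⁅iota φ A 0 y, iota φ A 2 (mul x z)⁆ = -iota φ A 1 (mul (mul x z) y) := by
    have h21 : (2 + 1 : ZMod 3) = 0 := by decide
    have h22 : (2 + 2 : ZMod 3) = 1 := by decide
    have := hmul 2 (mul x z) y
    rw [h21, h22] at this
    rw [← this, lie_skew]
  rw [h1, h2, h3, h4] at h
  rw [← h]
  have esub : ∀ a b : A, iota φ A 1 (a - b) = iota φ A 1 a - iota φ A 1 b := by
    intro a b
    simp [e1, map_sub]
  rw [esub]
  abel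
end

section
/- In the setting of a Lie algebra g with A₄-action and coordinate algebra (A,*), the components δ_i(x,y) = ρ_i([ι₀(x), ι₀(y)]) satisfy the cyclic identity δ₀(x,y)(z) + δ₀(y,z)(x) + δ₀(z,x)(y) = 0 for all x,y,z ∈ A. -/
/-- In a Lie algebra with `A₄`-action, the maps `δ₀` satisfy the cyclic identity
`δ₀(x,y)(z) + δ₀(y,z)(x) + δ₀(z,x)(y) = 0`. -/
theorem stmt7
    (F : Type*) [Field F] (hchar : (2 : F) ≠ 0)
    (g : Type*) [LieRing g] [LieAlgebra F g]
    (τ₁ τ₂ φ : g →ₗ⁅F⁆ g)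
    (hτ₁ : ∀ x, τ₁ (τ₁ x) = x) (hτ₂ : ∀ x, τ₂ (τ₂ x) = x)
    (hcomm : ∀ x, τ₁ (τ₂ x) = τ₂ (τ₁ x))
    (hφ3 : ∀ x, φ (φ (φ x)) = x)
    (hrel1 : ∀ x, φ (τ₁ x) = τ₂ (φ x))
    (hrel2 : ∀ x, φ (τ₂ x) = τ₁ (τ₂ (φ x)))
    (A : Submodule F g)
    (hA : A = Module.End.eigenspace (τ₁ : g →ₗ[F] g) 1 ⊓
              Module.End.eigenspace (τ₂ : g →ₗ[F] g) (-1))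
    (δ : ZMod 3 → A → A → A → A)
    (hδ : ∀ (i : ZMod 3) (x y z : A),
      ⁅⁅iota φ A 0 x, iota φ A 0 y⁆, iota φ A i z⁆ = iota φ A i (δ i x y z))
    :
    ∀ x y z : A, δ 0 x y z + δ 0 y z x + δ 0 z x y = 0 := by
  intro x y z
  have h : ∀ a b c : A, ⁅⁅(a : g), (b : g)⁆, (c : g)⁆ = ((δ 0 a b c : A) : g) := by
    intro a b c
    simpa [iota] using hδ 0 a b c
  have : ((δ 0 x y z + δ 0 y z x + δ 0 z x y : A) : g) = 0 := by
    push_cast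
    rw [← h, ← h, ← h]
    have jac := lie_jacobi (x : g) (y : g) (z : g)
    rw [← lie_skew (z : g) ⁅(x:g), (y:g)⁆, ← lie_skew (x : g) ⁅(y:g), (z:g)⁆,
      ← lie_skew (y : g) ⁅(z:g), (x:g)⁆] at *
    rw [← neg_eq_zero]
    abel_nf at jac ⊢
    convert jac using 2
  exact Subtype.ext this
end

section
/- Any normal symmetric triality algebra (A,*) satisfies the degree-5 identity: 0 = ((x*u)*(y*z))*v − (((y*z)*u)*x)*v + u*((y*z)*(v*x)) − u*(x*(v*(y*z))) + (z*x)*((u*v)*y) − y*((u*v)*(z*x)) + (z*(u*v))*(x*y) − ((x*y)*(u*v))*z, for all u,v,x,y,z ∈ A. -/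
/-- Any normal symmetric triality algebra `(A,*)` satisfies the degree-5 identity. -/
theorem stmt10
    (F : Type*) [Field F] (hchar : (2 : F) ≠ 0)
    (A : Type*) [AddCommGroup A] [Module F A]
    (mul : A →ₗ[F] A →ₗ[F] A)
    (δ : ZMod 3 → A →ₗ[F] A →ₗ[F] Module.End F A)
    (hskew : ∀ (i : ZMod 3) (x y : A), δ i x y = - δ i y x)
    (htri : ∀ (i : ZMod 3) (x y u v : A),
      δ i x y (mul u v) = mul (δ (i + 1) x y u) v + mul u (δ (i + 2) x y v))
    (hi : ∀ (i j : ZMod 3) (a b x y : A),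
      ⁅δ i a b, δ j x y⁆ = δ j (δ (i - j) a b x) y + δ j x (δ (i - j) a b y))
    (hii : ∀ x y z : A, δ 0 x (mul y z) + δ 2 y (mul z x) + δ 1 z (mul x y) = 0)
    (hiii : ∀ x y z : A, δ 0 x y z + δ 0 y z x + δ 0 z x y = 0)
    (hiv : ∀ x y z : A, δ 1 x y z = mul (mul x z) y - mul (mul y z) x)
    (hv : ∀ x y z : A, δ 2 x y z = mul y (mul z x) - mul x (mul z y))
    :
    ∀ u v x y z : A,
      0 = mul (mul (mul x u) (mul y z)) v - mul (mul (mul (mul y z) u) x) v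
        + mul u (mul (mul y z) (mul v x)) - mul u (mul x (mul v (mul y z)))
        + mul (mul z x) (mul (mul u v) y) - mul y (mul (mul u v) (mul z x))
        + mul (mul z (mul u v)) (mul x y) - mul (mul (mul x y) (mul u v)) z := by
  intro u v x y z
  have h : (δ 0 x (mul y z) + δ 2 y (mul z x) + δ 1 z (mul x y)) (mul u v) = 0 := by
    rw [hii]; rfl
  have h0 : δ 0 x (mul y z) (mul u v)
      = mul (δ 1 x (mul y z) u) v + mul u (δ 2 x (mul y z) v) := by
    have := htri 0 x (mul y z) u v
    norm_num at this
    exact this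
  rw [LinearMap.add_apply, LinearMap.add_apply, h0, hiv, hv, hiv, hv] at h
  simp only [map_add, map_sub, LinearMap.add_apply, LinearMap.sub_apply] at h
  linear_combination (norm := abel) -h
end

section
/- Let g be a Lie algebra with an S₄-action as automorphisms, extending the A₄-action (with generators τ₁, τ₂, φ and additionally τ = (12) satisfying τ² = id, τ₁τ = ττ₁, τ₂τ = ττ₂τ₁, τφ = φ²τ). Then τ preserves the eigenspace g₀, and the linear map x ↦ x̄ on A = g₀ defined by τ(ι₀(x)) = −ι₀(x̄) is an involution of the coordinate algebra (A,*): it is involutive (x̄̄ = x) and satisfies (x*y)‾ = ȳ * x̄ for all x,y ∈ A. -/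
section iota

variable {F : Type*} [Field F] {g : Type*} [LieRing g] [LieAlgebra F g]
  (φ : g →ₗ⁅F⁆ g) (A : Submodule F g) (x : A)

@[simp] lemma iota_zero : iota φ A 0 x = x := rfl

@[simp] lemma iota_one : iota φ A 1 x = φ x := rfl

@[simp] lemma iota_two : iota φ A 2 x = φ (φ x) := rfl

end iota

section Eigenspace

variable {R M : Type*} [CommRing R] [AddCommGroup M] [Module R M]

lemma apply_mem_eigenspace_one_inf_eigenspace_neg_one {t₁ t₂ t : Module.End R M}
    (h₁ : ∀ x, t₁ (t x) = t (t₁ x)) (h₂ : ∀ x, t₂ (t x) = t (t₂ (t₁ x)))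
    {v : M} (hv : v ∈ Module.End.eigenspace t₁ 1 ⊓ Module.End.eigenspace t₂ (-1)) :
    t v ∈ Module.End.eigenspace t₁ 1 ⊓ Module.End.eigenspace t₂ (-1) := by
  simp only [Submodule.mem_inf, Module.End.mem_eigenspace_iff, one_smul, neg_smul] at hv ⊢
  obtain ⟨hv₁, hv₂⟩ := hv
  exact ⟨by rw [h₁, hv₁], by rw [h₂, hv₁, hv₂, map_neg]⟩

lemma involutive_of_apply_eq_neg {A : Submodule R M} {t : Module.End R M}
    (ht : ∀ x, t (t x) = x) {bar : A → A} (hbar : ∀ x : A, t x = -(bar x : M)) :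
    Function.Involutive bar := fun x =>
  Subtype.ext <| by simpa only [hbar, map_neg, neg_neg] using ht x

end Eigenspace

section Conjugation

variable {F : Type*} [Field F] {g : Type*} [LieRing g] [LieAlgebra F g]
  {φ τ : g →ₗ⁅F⁆ g} {A : Submodule F g} {bar : A → A}

lemma apply_iota_one_eq_neg (hrel : ∀ x, τ (φ x) = φ (φ (τ x)))
    (hbar : ∀ x : A, τ x = -(bar x : g)) (x : A) :
    τ (iota φ A 1 x) = -iota φ A 2 (bar x) := by
  rw [iota_one, iota_two, hrel, hbar, map_neg, map_neg]

lemma apply_iota_two_eq_neg (hφ3 : ∀ x, φ (φ (φ x)) = x) (hrel : ∀ x, τ (φ x) = φ (φ (τ x)))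
    (hbar : ∀ x : A, τ x = -(bar x : g)) (x : A) :
    τ (iota φ A 2 x) = -iota φ A 1 (bar x) := by
  rw [iota_two, iota_one, hrel, hrel, hφ3, hbar, map_neg]

lemma bar_mul_eq_mul_bar (hφ3 : ∀ x, φ (φ (φ x)) = x) (hrel : ∀ x, τ (φ x) = φ (φ (τ x)))
    (hbar : ∀ x : A, τ x = -(bar x : g)) (mul : A → A → A)
    (hmul : ∀ x y : A, ⁅iota φ A 1 x, iota φ A 2 y⁆ = iota φ A 0 (mul x y)) (x y : A) :
    bar (mul x y) = mul (bar y) (bar x) := by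
  have key := congrArg τ (hmul x y)
  rw [LieHom.map_lie, apply_iota_one_eq_neg hrel hbar, apply_iota_two_eq_neg hφ3 hrel hbar,
    neg_lie, lie_neg, neg_neg, ← lie_skew, hmul, iota_zero, iota_zero, hbar] at key
  exact Subtype.ext (neg_injective key).symm

end Conjugation

theorem stmt13_general (F : Type*) [Field F]
    (g : Type*) [LieRing g] [LieAlgebra F g]
    (τ₁ τ₂ φ τ : g →ₗ⁅F⁆ g)
    (hτ : ∀ x, τ (τ x) = x)
    (hφ3 : ∀ x, φ (φ (φ x)) = x)
    (hrel3 : ∀ x, τ₁ (τ x) = τ (τ₁ x))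
    (hrel4 : ∀ x, τ₂ (τ x) = τ (τ₂ (τ₁ x)))
    (hrel5 : ∀ x, τ (φ x) = φ (φ (τ x)))
    (A : Submodule F g)
    (hA : A = Module.End.eigenspace (τ₁ : g →ₗ[F] g) 1 ⊓
              Module.End.eigenspace (τ₂ : g →ₗ[F] g) (-1))
    (mul : A →ₗ[F] A →ₗ[F] A)
    (hmul : ∀ x y : A, ⁅iota φ A 1 x, iota φ A 2 y⁆ = iota φ A 0 (mul x y))
    (bar : A → A)
    (hbar : ∀ x : A, τ (x : g) = -((bar x : A) : g)) :
    (∀ v ∈ A, τ v ∈ A) ∧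
    (∀ x : A, bar (bar x) = x) ∧
    (∀ x y : A, bar (mul x y) = mul (bar y) (bar x)) := by
  refine ⟨?_, involutive_of_apply_eq_neg (t := τ.toLinearMap) hτ hbar,
    bar_mul_eq_mul_bar hφ3 hrel5 hbar (fun x y => mul x y) hmul⟩
  subst hA
  exact fun v hv => apply_mem_eigenspace_one_inf_eigenspace_neg_one
    (t := τ.toLinearMap) hrel3 hrel4 hv

/-- For a Lie algebra with `S₄`-action extending the `A₄`-action, the extra
transposition `τ = (12)` preserves `g₀`, and the map `x ↦ x̄` on `A = g₀`
defined by `τ(ι₀(x)) = −ι₀(x̄)` is an involution of `(A,*)`: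
`x̄̄ = x` and `(x*y)‾ = ȳ*x̄`. -/
theorem stmt13 (F : Type*) [Field F] (hchar : (2 : F) ≠ 0)
    (g : Type*) [LieRing g] [LieAlgebra F g]
    (τ₁ τ₂ φ τ : g →ₗ⁅F⁆ g)
    (hτ₁ : ∀ x, τ₁ (τ₁ x) = x) (hτ₂ : ∀ x, τ₂ (τ₂ x) = x) (hτ : ∀ x, τ (τ x) = x)
    (hcomm : ∀ x, τ₁ (τ₂ x) = τ₂ (τ₁ x))
    (hφ3 : ∀ x, φ (φ (φ x)) = x)
    (hrel1 : ∀ x, φ (τ₁ x) = τ₂ (φ x))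
    (hrel2 : ∀ x, φ (τ₂ x) = τ₁ (τ₂ (φ x)))
    (hrel3 : ∀ x, τ₁ (τ x) = τ (τ₁ x))
    (hrel4 : ∀ x, τ₂ (τ x) = τ (τ₂ (τ₁ x)))
    (hrel5 : ∀ x, τ (φ x) = φ (φ (τ x)))
    (A : Submodule F g)
    (hA : A = Module.End.eigenspace (τ₁ : g →ₗ[F] g) 1 ⊓
              Module.End.eigenspace (τ₂ : g →ₗ[F] g) (-1))
    (mul : A →ₗ[F] A →ₗ[F] A)
    (hmul : ∀ x y : A, ⁅iota φ A 1 x, iota φ A 2 y⁆ = iota φ A 0 (mul x y))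
    (bar : A → A)
    (hbar : ∀ x : A, τ (x : g) = -((bar x : A) : g)) :
    (∀ v ∈ A, τ v ∈ A) ∧
    (∀ x : A, bar (bar x) = x) ∧
    (∀ x y : A, bar (mul x y) = mul (bar y) (bar x)) :=
  stmt13_general F g τ₁ τ₂ φ τ hτ hφ3 hrel3 hrel4 hrel5 A hA mul hmul bar hbar
end

section
/- Let (A,·) be an algebra with involution x ↦ x̄, and define x*y = (x·y)‾ = ȳ·x̄. Then stri(A,*) = lrt(A,·,‾), where lrt(A,·,‾) = {(d₀,d₁,d₂) ∈ gl(A)³ : d̄_i(x·y) = d_{i+1}(x)·y + x·d_{i+2}(y) for all x,y ∈ A and i ∈ Z/3}, with d̄(x) = (d(x̄))‾. -/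
/-- The Lie related triple set `lrt(A,·,‾)`: triples with
`d̄ᵢ(x·y) = dᵢ₊₁(x)·y + x·dᵢ₊₂(y)`, where `d̄(x) = (d(x̄))‾`. -/
def lrtSet (F : Type*) [Field F] (A : Type*) [AddCommGroup A] [Module F A]
    (mul : A →ₗ[F] A →ₗ[F] A) (bar : A →ₗ[F] A) : Set (ZMod 3 → Module.End F A) :=
  {d | ∀ (i : ZMod 3) (x y : A),
    bar (d i (bar (mul x y))) = mul (d (i + 1) x) y + mul x (d (i + 2) y)}

/-- For an algebra with involution `(A,·,‾)` and `x*y := (x·y)‾`, one has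
`stri(A,*) = lrt(A,·,‾)`. -/
theorem stmt14 (F : Type*) [Field F] (hchar : (2 : F) ≠ 0)
    (A : Type*) [AddCommGroup A] [Module F A]
    (mul : A →ₗ[F] A →ₗ[F] A) (bar : A →ₗ[F] A)
    (hinv : ∀ x, bar (bar x) = x)
    (hanti : ∀ x y, bar (mul x y) = mul (bar y) (bar x)) :
    striSet F A (mul.compr₂ bar) = lrtSet F A mul bar := by
  ext d
  simp only [striSet, lrtSet, Set.mem_setOf_eq, LinearMap.compr₂_apply]
  constructor
  · intro h i x y
    rw [h i x y, map_add, hinv, hinv]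
  · intro h i x y
    have hb : ∀ a b : A, bar a = b → a = bar b := by
      intro a b hab; rw [← hab, hinv]
    rw [hb _ _ (h i x y), map_add]
end

section
/- Let g be a Lie algebra over a field of characteristic ≠ 2. Then g, equipped with the product x·y = [x,y], the involution x̄ = −x, and the skew-symmetric map δ(x,y) = (ad_{[x,y]}, ad_{[x,y]}, ad_{[x,y]}), is a normal Lie related triple algebra: δ(x,y) ∈ lrt(g,·,‾) and conditions (i)–(vi) of a normal LRTA hold. -/
/-- Any Lie algebra `g`, with product `x·y = [x,y]`, involution `x̄ = −x` and
`δᵢ(x,y) = ad_{[x,y]}`, is a normal Lie related triple algebra: `δ(x,y)` lies in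
`lrt(g,·,‾)` and conditions (i)–(vi) hold. -/
theorem stmt18 (F : Type*) [Field F] (hchar : (2 : F) ≠ 0)
    (g : Type*) [LieRing g] [LieAlgebra F g] :
    -- `δ(x,y) ∈ lrt(g,·,‾)`: with `bar = −id`, `d̄ᵢ(u·v) = dᵢ₊₁(u)·v + u·dᵢ₊₂(v)`
    -- reads `ad_{[x,y]}[u,v] = [ad_{[x,y]}u, v] + [u, ad_{[x,y]}v]`
    (∀ x y u v : g,
      LieAlgebra.ad F g ⁅x, y⁆ ⁅u, v⁆
        = ⁅LieAlgebra.ad F g ⁅x, y⁆ u, v⁆ + ⁅u, LieAlgebra.ad F g ⁅x, y⁆ v⁆) ∧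
    -- δ is skew-symmetric
    (∀ x y : g, LieAlgebra.ad F g ⁅x, y⁆ = -LieAlgebra.ad F g ⁅y, x⁆) ∧
    -- (i)
    (∀ a b x y : g,
      ⁅(LieAlgebra.ad F g ⁅a, b⁆ : Module.End F g), LieAlgebra.ad F g ⁅x, y⁆⁆
        = LieAlgebra.ad F g ⁅(LieAlgebra.ad F g ⁅a, b⁆) x, y⁆
          + LieAlgebra.ad F g ⁅x, (LieAlgebra.ad F g ⁅a, b⁆) y⁆) ∧
    -- (ii) `δ₀(x̄, y·z) + δ₁(ȳ, z·x) + δ₂(z̄, x·y) = 0`, with `x̄ = −x`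
    (∀ x y z : g,
      LieAlgebra.ad F g ⁅-x, ⁅y, z⁆⁆ + LieAlgebra.ad F g ⁅-y, ⁅z, x⁆⁆
        + LieAlgebra.ad F g ⁅-z, ⁅x, y⁆⁆ = 0) ∧
    -- (iii)
    (∀ x y z : g,
      LieAlgebra.ad F g ⁅x, y⁆ z + LieAlgebra.ad F g ⁅y, z⁆ x
        + LieAlgebra.ad F g ⁅z, x⁆ y = 0) ∧
    -- (iv) `δ₁(x,y) = L_ȳ L_x − L_x̄ L_y`, with `L_x = ad x` and `x̄ = −x`
    (∀ x y : g,
      (LieAlgebra.ad F g ⁅x, y⁆ : Module.End F g)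
        = (LieAlgebra.ad F g (-y) : Module.End F g) * LieAlgebra.ad F g x
          - (LieAlgebra.ad F g (-x) : Module.End F g) * LieAlgebra.ad F g y) ∧
    -- (v) `δ₂(x,y) = R_ȳ R_x − R_x̄ R_y`, with `R_x = −ad x` and `x̄ = −x`
    (∀ x y : g,
      (LieAlgebra.ad F g ⁅x, y⁆ : Module.End F g)
        = (-(LieAlgebra.ad F g (-y)) : Module.End F g) * (-(LieAlgebra.ad F g x))
          - (-(LieAlgebra.ad F g (-x)) : Module.End F g) * (-(LieAlgebra.ad F g y))) ∧
    -- (vi) `(δᵢ(x,y))‾ = δ₋ᵢ(x̄, ȳ)`, with `d̄ = (−id) ∘ d ∘ (−id)` and `x̄ = −x`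
    (∀ x y : g,
      (-LinearMap.id : Module.End F g) ∘ₗ (LieAlgebra.ad F g ⁅x, y⁆ : Module.End F g)
          ∘ₗ (-LinearMap.id)
        = LieAlgebra.ad F g ⁅-x, -y⁆) := by
  refine ⟨?_, ?_, ?_, ?_, ?_, ?_, ?_, ?_⟩
  · intro x y u v
    simp only [LieAlgebra.ad_apply]
    exact leibniz_lie _ _ _
  · intro x y
    ext z
    simp only [LieAlgebra.ad_apply, LinearMap.neg_apply]
    rw [← neg_lie, lie_skew]
  · intro a b x y
    ext z
    simp only [Ring.lie_def, LinearMap.sub_apply, Module.End.mul_apply,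
      LieAlgebra.ad_apply, LinearMap.add_apply]
    rw [← lie_lie, leibniz_lie ⁅a, b⁆ x y, add_lie]
  · intro x y z
    ext w
    simp only [LinearMap.add_apply, LieAlgebra.ad_apply, LinearMap.zero_apply, neg_lie]
    rw [← neg_add, ← neg_add, ← add_lie, ← add_lie, lie_jacobi, zero_lie, neg_zero]
  · intro x y z
    simp only [LieAlgebra.ad_apply]
    rw [← lie_skew ⁅x, y⁆ z, ← lie_skew ⁅y, z⁆ x, ← lie_skew ⁅z, x⁆ y,
      ← neg_add, ← neg_add, lie_jacobi, neg_zero]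
  · intro x y
    ext z
    simp only [LinearMap.sub_apply, Module.End.mul_apply, LieAlgebra.ad_apply, neg_lie]
    rw [leibniz_lie x y z]
    abel
  · intro x y
    ext z
    simp only [LinearMap.sub_apply, Module.End.mul_apply, LieAlgebra.ad_apply, neg_lie,
      LinearMap.neg_apply, lie_neg, neg_neg]
    rw [leibniz_lie x y z]
    abel
  · intro x y
    ext z
    simp [LieAlgebra.ad_apply]
end
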